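/- arXiv:1101.3688 — 3 statements merged into one kernel-verified Lean document; each statement's English description precedes it below -/
import Mathlib

section
/- For every positive integer n and all real x with 0 ≤ x < 1, ₂F₁(na/2, (na+1)/2; 1/2; x) = θ₁(x)^{-a} · ₂F₁(a/2, (a+1)/2; 1/2; x·θ₂(x)²/θ₁(x)²), where a is any real number, θ₁(x) = Σ_{k=0}^{⌊n/2⌋} C(n,2k) x^k, θ₂(x) = Σ_{k=0}^{⌊(n-1)/2⌋} C(n,2k+1) x^k, and both hypergeometric series are evaluated via the elementary closed form ₂F₁(b/2,(b+1)/2;1/2;z) = ((1-√z)^{-b}+(1+√z)^{-b})/2. -/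
/-!
With `s = √x`, splitting the binomial expansion of `(1 ± s)ⁿ` into even and odd powers gives
`θ₁(x) ± s θ₂(x) = (1 ± s)ⁿ`. Hence `t = s θ₂(x) / θ₁(x)` satisfies `1 ± t = (1 ± s)ⁿ / θ₁(x)`,
and since `√(x θ₂²/θ₁²) = t`, raising to the power `-a` turns the closed form of the right-hand
side into that of the left-hand side, the factor `θ₁(x)^a` cancelling against `θ₁(x)^(-a)`.
-/

/-- `θ₁(x) = Σ_{k=0}^{⌊n/2⌋} C(n,2k) x^k`. -/
noncomputable def theta1 (n : ℕ) (x : ℝ) : ℝ :=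
  ∑ k ∈ Finset.range (n / 2 + 1), (n.choose (2 * k) : ℝ) * x ^ k

/-- `θ₂(x) = Σ_{k=0}^{⌊(n-1)/2⌋} C(n,2k+1) x^k`. -/
noncomputable def theta2 (n : ℕ) (x : ℝ) : ℝ :=
  ∑ k ∈ Finset.range ((n - 1) / 2 + 1), (n.choose (2 * k + 1) : ℝ) * x ^ k

/-- The dihedral Gauss hypergeometric function
`₂F₁(b/2,(b+1)/2;1/2;z) = ((1-√z)^{-b} + (1+√z)^{-b})/2`, via its closed form. -/
noncomputable def dihedral2F1 (b z : ℝ) : ℝ :=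
  ((1 - Real.sqrt z) ^ (-b) + (1 + Real.sqrt z) ^ (-b)) / 2

open Finset

theorem sum_range_two_mul {M : Type*} [AddCommMonoid M] (f : ℕ → M) (m : ℕ) :
    ∑ i ∈ range (2 * m), f i = ∑ i ∈ range m, (f (2 * i) + f (2 * i + 1)) := by
  induction m with
  | zero => simp
  | succ m ih => rw [Nat.mul_succ, sum_range_succ, sum_range_succ, ih, sum_range_succ, add_assoc]

theorem theta1_eq_sum_range (n : ℕ) (x : ℝ) :
    theta1 n x = ∑ k ∈ range (n + 1), (n.choose (2 * k) : ℝ) * x ^ k :=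
  (eventually_constant_sum (fun k hk ↦ by simp [Nat.choose_eq_zero_of_lt (by omega : n < 2 * k)])
    (by omega)).symm

theorem theta2_eq_sum_range (n : ℕ) (x : ℝ) :
    theta2 n x = ∑ k ∈ range (n + 1), (n.choose (2 * k + 1) : ℝ) * x ^ k :=
  (eventually_constant_sum
    (fun k hk ↦ by simp [Nat.choose_eq_zero_of_lt (by omega : n < 2 * k + 1)]) (by omega)).symm

theorem theta1_add_mul_theta2 (n : ℕ) (s : ℝ) :
    theta1 n (s ^ 2) + s * theta2 n (s ^ 2) = (1 + s) ^ n := by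
  have hbinom : (1 + s) ^ n = ∑ j ∈ range (2 * (n + 1)), (n.choose j : ℝ) * s ^ j := by
    rw [add_comm, add_pow, eventually_constant_sum (fun j hj ↦ by
      simp [Nat.choose_eq_zero_of_lt (by omega : n < j)]) (by omega : n + 1 ≤ 2 * (n + 1))]
    simp only [one_pow, mul_one, mul_comm]
  rw [hbinom, sum_range_two_mul, theta1_eq_sum_range, theta2_eq_sum_range, mul_sum, ← sum_add_distrib]
  refine sum_congr rfl fun k _ ↦ ?_
  ring

theorem theta1_sub_mul_theta2 (n : ℕ) (s : ℝ) :
    theta1 n (s ^ 2) - s * theta2 n (s ^ 2) = (1 - s) ^ n := by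
  simpa [neg_sq, sub_eq_add_neg] using theta1_add_mul_theta2 n (-s)

theorem one_le_theta1 (n : ℕ) {x : ℝ} (hx : 0 ≤ x) : 1 ≤ theta1 n x := by
  rw [theta1, sum_range_succ']
  simpa using sum_nonneg fun k _ ↦ by positivity

theorem theta2_nonneg (n : ℕ) {x : ℝ} (hx : 0 ≤ x) : 0 ≤ theta2 n x :=
  sum_nonneg fun k _ ↦ by positivity

theorem dihedral2F1_sq (b : ℝ) {t : ℝ} (ht : 0 ≤ t) :
    dihedral2F1 b (t ^ 2) = ((1 - t) ^ (-b) + (1 + t) ^ (-b)) / 2 := by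
  rw [dihedral2F1, Real.sqrt_sq ht]

theorem rpow_neg_mul_dihedral2F1_div_sq (a : ℝ) {T u : ℝ} (hT : 0 < T) (hu : 0 ≤ u)
    (huT : u ≤ T) :
    T ^ (-a) * dihedral2F1 a ((u / T) ^ 2) = ((T - u) ^ (-a) + (T + u) ^ (-a)) / 2 := by
  have hsub : 1 - u / T = (T - u) / T := by field_simp
  have hadd : 1 + u / T = (T + u) / T := by field_simp
  rw [dihedral2F1_sq a (by positivity), hsub, hadd, Real.div_rpow (by linarith) hT.le,
    Real.div_rpow (by linarith) hT.le]
  field_simp [(Real.rpow_pos_of_pos hT (-a)).ne']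

theorem stmt9_general (n : ℕ) (a : ℝ) (x : ℝ) (hx0 : 0 ≤ x) (hx1 : x < 1) :
    dihedral2F1 ((n : ℝ) * a) x
      = theta1 n x ^ (-a) * dihedral2F1 a (x * theta2 n x ^ 2 / theta1 n x ^ 2) := by
  set s := Real.sqrt x
  have hs0 : 0 ≤ s := Real.sqrt_nonneg x
  have hs1 : s ≤ 1 := Real.sqrt_le_one.mpr hx1.le
  have hsx : s ^ 2 = x := Real.sq_sqrt hx0
  have hplus := theta1_add_mul_theta2 n s
  have hminus := theta1_sub_mul_theta2 n s
  rw [hsx] at hplus hminus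
  have hu : 0 ≤ s * theta2 n x := mul_nonneg hs0 (theta2_nonneg n hx0)
  have huT : s * theta2 n x ≤ theta1 n x := by
    linarith [pow_nonneg (by linarith : (0 : ℝ) ≤ 1 - s) n]
  calc dihedral2F1 ((n : ℝ) * a) x
      = (((1 - s) ^ n) ^ (-a) + ((1 + s) ^ n) ^ (-a)) / 2 := by
        rw [dihedral2F1, ← mul_neg, Real.rpow_natCast_mul (by linarith),
          Real.rpow_natCast_mul (by linarith)]
    _ = ((theta1 n x - s * theta2 n x) ^ (-a) + (theta1 n x + s * theta2 n x) ^ (-a)) / 2 := by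
        rw [hminus, hplus]
    _ = theta1 n x ^ (-a) * dihedral2F1 a ((s * theta2 n x / theta1 n x) ^ 2) :=
        (rpow_neg_mul_dihedral2F1_div_sq a (by linarith [one_le_theta1 n hx0]) hu huT).symm
    _ = theta1 n x ^ (-a) * dihedral2F1 a (x * theta2 n x ^ 2 / theta1 n x ^ 2) := by
        rw [div_pow, mul_pow, hsx]

theorem stmt9 (n : ℕ) (hn : 0 < n) (a : ℝ) (x : ℝ) (hx0 : 0 ≤ x) (hx1 : x < 1) :
    dihedral2F1 ((n : ℝ) * a) x
      = theta1 n x ^ (-a) * dihedral2F1 a (x * theta2 n x ^ 2 / theta1 n x ^ 2) :=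
  stmt9_general n a x hx0 hx1
end

section
/- For every real a > 0 and all x with 0 ≤ x < 1: ₂F₁(a, a+1/2; 1/2; x) = ((1-√x)^{-2a} + (1+√x)^{-2a})/2. -/
open Filter FormalMultilinearSeries

noncomputable def binCoeff (α : ℝ) (n : ℕ) : ℝ :=
  (ascPochhammer ℝ n).eval α / n.factorial

lemma binCoeff_pos {α : ℝ} (hα : 0 < α) (n : ℕ) : 0 < binCoeff α n :=
  div_pos (ascPochhammer_pos n α hα) (by positivity)

lemma binCoeff_succ (α : ℝ) (n : ℕ) :
    (n + 1 : ℝ) * binCoeff α (n + 1) = binCoeff α n * (α + n) := by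
  unfold binCoeff
  rw [ascPochhammer_succ_eval, Nat.factorial_succ]
  have h1 : (n.factorial : ℝ) ≠ 0 := Nat.cast_ne_zero.mpr n.factorial_ne_zero
  have h2 : (n + 1 : ℝ) ≠ 0 := by positivity
  push_cast
  field_simp

lemma binCoeff_ratio {α : ℝ} (hα : 0 < α) :
    Tendsto (fun n : ℕ ↦ ‖binCoeff α (n + 1)‖ / ‖binCoeff α n‖) atTop (nhds 1) := by
  have key : ∀ n : ℕ, ‖binCoeff α (n + 1)‖ / ‖binCoeff α n‖ = 1 + (α - 1) / (n + 1) := by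
    intro n
    have h1 := binCoeff_pos hα n
    have h2 := binCoeff_pos hα (n + 1)
    rw [Real.norm_of_nonneg h2.le, Real.norm_of_nonneg h1.le]
    have h4 : (n + 1 : ℝ) ≠ 0 := by positivity
    have h3 : binCoeff α (n + 1) = binCoeff α n * (α + n) / (n + 1) := by
      have h := binCoeff_succ α n
      field_simp
      linarith [h]
    rw [h3]
    field_simp
    ring
  simp_rw [key]
  have h : Tendsto (fun n : ℕ ↦ (α - 1) / ((n : ℝ) + 1)) atTop (nhds 0) := by
    apply Tendsto.const_div_atTop
    exact tendsto_atTop_add_const_right _ _ tendsto_natCast_atTop_atTop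
  simpa using tendsto_const_nhds.add h

lemma binCoeff_radius {α : ℝ} (hα : 0 < α) :
    1 ≤ (ofScalars ℝ (binCoeff α)).radius := by
  have h := inv_le_ofScalars_radius_of_tendsto ℝ (binCoeff α) one_ne_zero
    (by simpa using binCoeff_ratio hα)
  simpa using h

lemma binomial_hasSum {α : ℝ} (hα : 0 < α) {t : ℝ} (ht : |t| < 1) :
    HasSum (fun n : ℕ ↦ binCoeff α n * t ^ n) ((1 - t) ^ (-α)) := by
  set p := ofScalars ℝ (binCoeff α) with hp
  have hrad := binCoeff_radius hα
  have hball : HasFPowerSeriesOnBall p.sum p 0 p.radius :=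
    p.hasFPowerSeriesOnBall (lt_of_lt_of_le zero_lt_one hrad)
  set f := p.sum with hfdef
  have hmem : ∀ s : ℝ, |s| < 1 → s ∈ Metric.eball (0 : ℝ) p.radius := by
    intro s hs
    rw [Metric.mem_eball, edist_zero_right]
    refine lt_of_lt_of_le ?_ hrad
    rw [enorm_eq_nnnorm, ← ENNReal.coe_one, ENNReal.coe_lt_coe, ← NNReal.coe_lt_coe]
    simpa [Real.norm_eq_abs] using hs
  have hSsum : ∀ s : ℝ, |s| < 1 → HasSum (fun n ↦ binCoeff α n * s ^ n) (f s) := by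
    intro s hs
    have h := hball.hasSum (hmem s hs)
    rw [zero_add] at h
    have he : (fun n ↦ p n fun _ ↦ s) = fun n ↦ binCoeff α n * s ^ n := by
      funext n; rw [hp, ofScalars_apply_eq, smul_eq_mul]
    rwa [he] at h
  have hdf : ∀ s : ℝ, |s| < 1 → HasDerivAt f (deriv f s) s := fun s hs ↦
    ((hball.analyticAt_of_mem (hmem s hs)).differentiableAt).hasDerivAt
  have hUsum : ∀ s : ℝ, |s| < 1 →
      HasSum (fun n : ℕ ↦ ((n : ℝ) + 1) * binCoeff α (n + 1) * s ^ (n + 1))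
        (s * deriv f s) := by
    intro s hs
    have h1 := (hball.fderiv).hasSum (hmem s hs)
    rw [zero_add] at h1
    have h2 := h1.mapL (ContinuousLinearMap.apply ℝ ℝ s)
    have h3 : ∀ n : ℕ, (ContinuousLinearMap.apply ℝ ℝ s) (p.derivSeries n (fun _ ↦ s)) =
        ((n : ℝ) + 1) * binCoeff α (n + 1) * s ^ (n + 1) := by
      intro n
      rw [ContinuousLinearMap.apply_apply, p.derivSeries_apply_diag, hp,
        ofScalars_apply_eq, nsmul_eq_mul, smul_eq_mul]
      push_cast
      ring
    rw [funext h3] at h2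
    have h4 : (ContinuousLinearMap.apply ℝ ℝ s) (fderiv ℝ f s) = s * deriv f s := by
      rw [ContinuousLinearMap.apply_apply]
      have : fderiv ℝ f s s = fderiv ℝ f s (s • 1) := by rw [smul_eq_mul, mul_one]
      rw [this, (fderiv ℝ f s).map_smul, fderiv_apply_one_eq_deriv, smul_eq_mul]
    rwa [h4] at h2
  have hode : ∀ s : ℝ, |s| < 1 → (1 - s) * deriv f s = α * f s := by
    intro s hs
    rcases eq_or_ne s 0 with rfl | hs0
    · have h0 : HasDerivAt f (p 1 fun _ ↦ 1) 0 := hball.hasFPowerSeriesAt.hasDerivAt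
      have hd0 : deriv f 0 = p 1 fun _ ↦ 1 := h0.deriv
      have hp1 : (p 1 fun _ ↦ (1 : ℝ)) = α := by
        rw [hp, ofScalars_apply_eq, smul_eq_mul]
        simp [binCoeff, ascPochhammer_one]
      have hf0 : f 0 = 1 := by
        have h1 := hSsum 0 (by norm_num)
        have h2 : HasSum (fun n : ℕ ↦ binCoeff α n * (0 : ℝ) ^ n)
            (binCoeff α 0 * (0 : ℝ) ^ 0) :=
          hasSum_single 0 (fun n hn ↦ by simp [zero_pow hn])
        have := h1.unique h2
        simpa [binCoeff] using this
      rw [hf0, hd0, hp1]; ring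
    · have hu := hUsum s hs
      have hS := hSsum s hs
      have hαS : HasSum (fun n : ℕ ↦ α * binCoeff α n * s ^ (n + 1)) (α * (s * f s)) := by
        have h := hS.mul_left (α * s)
        have he : (fun n : ℕ ↦ (α * s) * (binCoeff α n * s ^ n)) =
            (fun n : ℕ ↦ α * binCoeff α n * s ^ (n + 1)) := by
          funext n; rw [pow_succ]; ring
        rw [he] at h
        rwa [mul_assoc] at h
      have hshift : HasSum (fun n : ℕ ↦ (n : ℝ) * binCoeff α n * s ^ (n + 1))
          (s * (s * deriv f s)) := by
        have h1 := hu.mul_left s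
        have h2 : (fun n : ℕ ↦ s * (((n : ℝ) + 1) * binCoeff α (n + 1) * s ^ (n + 1))) =
            (fun n : ℕ ↦ (((n + 1 : ℕ) : ℝ)) * binCoeff α (n + 1) * s ^ ((n + 1) + 1)) := by
          funext n; push_cast; ring
        rw [h2] at h1
        have h3 := (hasSum_nat_add_iff
          (f := fun n : ℕ ↦ (n : ℝ) * binCoeff α n * s ^ (n + 1)) 1).mp h1
        simpa using h3
      have hsub := hu.sub hshift
      have hterm : (fun n : ℕ ↦ ((n : ℝ) + 1) * binCoeff α (n + 1) * s ^ (n + 1)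
          - (n : ℝ) * binCoeff α n * s ^ (n + 1))
          = fun n : ℕ ↦ α * binCoeff α n * s ^ (n + 1) := by
        funext n
        have h := binCoeff_succ α n
        calc ((n : ℝ) + 1) * binCoeff α (n + 1) * s ^ (n + 1)
            - (n : ℝ) * binCoeff α n * s ^ (n + 1)
            = ((n : ℝ) + 1) * binCoeff α (n + 1) * s ^ (n + 1)
              - (n : ℝ) * binCoeff α n * s ^ (n + 1) := rfl
          _ = binCoeff α n * (α + n) * s ^ (n + 1)
              - (n : ℝ) * binCoeff α n * s ^ (n + 1) := by rw [h]
          _ = α * binCoeff α n * s ^ (n + 1) := by ring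
      rw [hterm] at hsub
      have hkey := hαS.unique hsub
      apply mul_left_cancel₀ hs0
      linear_combination -hkey
  have hg : ∀ s : ℝ, |s| < 1 → HasDerivAt (fun y ↦ (1 - y) ^ α * f y) 0 s := by
    intro s hs
    have h1s : (0 : ℝ) < 1 - s := by
      rcases abs_lt.mp hs with ⟨_, h⟩; linarith
    have hA : HasDerivAt (fun y : ℝ ↦ 1 - y) (-1) s := by
      simpa using (hasDerivAt_id s).const_sub 1
    have hB := hA.rpow_const (p := α) (Or.inl h1s.ne')
    have hC := hB.mul (hdf s hs)
    have hrw : (1 - s) ^ α = (1 - s) ^ (α - 1) * (1 - s) := by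
      rw [← Real.rpow_add_one h1s.ne' (α - 1), sub_add_cancel]
    have hzero : -1 * α * (1 - s) ^ (α - 1) * f s + (1 - s) ^ α * deriv f s = 0 := by
      rw [hrw]
      linear_combination (1 - s) ^ (α - 1) * hode s hs
    rw [← hzero]
    exact hC
  have hf0 : f 0 = 1 := by
    have h1 := hSsum 0 (by norm_num)
    have h2 : HasSum (fun n : ℕ ↦ binCoeff α n * (0 : ℝ) ^ n)
        (binCoeff α 0 * (0 : ℝ) ^ 0) :=
      hasSum_single 0 (fun n hn ↦ by simp [zero_pow hn])
    have := h1.unique h2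
    simpa [binCoeff] using this
  have hgc : (1 - t) ^ α * f t = 1 := by
    have habs : ∀ y ∈ Set.Icc (min t 0) (max t 0), |y| < 1 := by
      intro y hy
      rcases hy with ⟨h1, h2⟩
      rw [abs_lt] at ht ⊢
      constructor
      · calc -1 < min t 0 := by rcases min_cases t 0 with ⟨he, _⟩ | ⟨he, _⟩ <;> rw [he] <;> linarith [ht.1]
          _ ≤ y := h1
      · calc y ≤ max t 0 := h2
          _ < 1 := by rcases max_cases t 0 with ⟨he, _⟩ | ⟨he, _⟩ <;> rw [he] <;> linarith [ht.2]
    have hconst := constant_of_has_deriv_right_zero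
      (f := fun y ↦ (1 - y) ^ α * f y) (a := min t 0) (b := max t 0)
      (fun y hy ↦ ((hg y (habs y hy)).continuousAt).continuousWithinAt)
      (fun y hy ↦ (hg y (habs y ⟨hy.1, hy.2.le⟩)).hasDerivWithinAt)
    have h0 := hconst 0 ⟨min_le_right t 0, le_max_right t 0⟩
    have hT := hconst t ⟨min_le_left t 0, le_max_left t 0⟩
    rw [hT, ← h0]
    simp [hf0]
  have h1t : (0 : ℝ) < 1 - t := by
    rcases abs_lt.mp ht with ⟨_, h⟩; linarith
  have hft : f t = (1 - t) ^ (-α) := by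
    rw [Real.rpow_neg h1t.le]
    field_simp
    have hne : (1 - t) ^ α ≠ 0 := (Real.rpow_pos_of_pos h1t α).ne'
    field_simp at hgc ⊢
    linarith [hgc]
  have := hSsum t ht
  rwa [hft] at this

lemma asc_dup (a : ℝ) : ∀ p : ℕ, (ascPochhammer ℝ (2 * p)).eval (2 * a)
    = 4 ^ p * (ascPochhammer ℝ p).eval a * (ascPochhammer ℝ p).eval (a + 1 / 2)
  | 0 => by simp
  | (p + 1) => by
    have h : 2 * (p + 1) = (2 * p) + 1 + 1 := by ring
    rw [h, ascPochhammer_succ_eval, ascPochhammer_succ_eval,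
      ascPochhammer_succ_eval, ascPochhammer_succ_eval, asc_dup a p]
    push_cast
    ring

lemma fact_dup : ∀ p : ℕ, ((2 * p).factorial : ℝ)
    = 4 ^ p * (ascPochhammer ℝ p).eval (1 / 2) * p.factorial
  | 0 => by simp
  | (p + 1) => by
    have h : 2 * (p + 1) = (2 * p) + 1 + 1 := by ring
    rw [h, Nat.factorial_succ, Nat.factorial_succ, Nat.factorial_succ,
      ascPochhammer_succ_eval]
    push_cast
    rw [fact_dup p]
    ring

lemma term_eq (a : ℝ) (p : ℕ) :
    (ascPochhammer ℝ p).eval a * (ascPochhammer ℝ p).eval (a + 1 / 2)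
      / ((ascPochhammer ℝ p).eval (1 / 2) * (p.factorial : ℝ))
    = binCoeff (2 * a) (2 * p) := by
  rw [binCoeff, asc_dup, fact_dup]
  have h1 : (0:ℝ) < (ascPochhammer ℝ p).eval (1/2) :=
    ascPochhammer_pos p _ (by norm_num)
  have h2 : (0:ℝ) < (p.factorial : ℝ) := by positivity
  have h3 : (0:ℝ) < (4:ℝ) ^ p := by positivity
  field_simp

/-- The Gauss hypergeometric series `₂F₁(A,B;C;x) = Σ_p (A)_p (B)_p / ((C)_p p!) x^p`. -/
noncomputable def hyp2F1 (A B C x : ℝ) : ℝ :=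
  ∑' p : ℕ, ((ascPochhammer ℝ p).eval A * (ascPochhammer ℝ p).eval B
    / ((ascPochhammer ℝ p).eval C * (Nat.factorial p))) * x ^ p

theorem stmt14 (a : ℝ) (ha : 0 < a) (x : ℝ) (hx0 : 0 ≤ x) (hx1 : x < 1) :
    hyp2F1 a (a + 1 / 2) (1 / 2) x
      = ((1 - Real.sqrt x) ^ (-(2 * a)) + (1 + Real.sqrt x) ^ (-(2 * a))) / 2 := by
  set s := Real.sqrt x with hsdef
  have hs0 : 0 ≤ s := Real.sqrt_nonneg x
  have hs1 : s < 1 := by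
    rw [hsdef, show (1:ℝ) = Real.sqrt 1 by simp]
    exact Real.sqrt_lt_sqrt hx0 hx1
  have hsx : s ^ 2 = x := Real.sq_sqrt hx0
  have habs : |s| < 1 := by rwa [abs_of_nonneg hs0]
  have habs' : |(-s)| < 1 := by rwa [abs_neg]
  have h2a : 0 < 2 * a := by linarith
  have h1 := binomial_hasSum h2a habs
  have h2 := binomial_hasSum h2a habs'
  rw [show (1 : ℝ) - -s = 1 + s by ring] at h2
  have havg := (h1.add h2).div_const 2
  set F : ℕ → ℝ := fun n ↦
    (binCoeff (2*a) n * s ^ n + binCoeff (2*a) n * (-s) ^ n) / 2 with hF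
  have hinj : Function.Injective (fun p : ℕ ↦ 2 * p) := fun m n h ↦ by simp only [] at h; omega
  have hzero : ∀ m : ℕ, m ∉ Set.range (fun p : ℕ ↦ 2 * p) → F m = 0 := by
    intro m hm
    have hodd : Odd m := by
      rcases Nat.even_or_odd m with he | ho
      · obtain ⟨k, hk⟩ := he
        exact absurd (Set.mem_range.mpr ⟨k, by omega⟩) hm
      · exact ho
    rw [hF]
    simp only []
    rw [hodd.neg_pow]
    ring
  have hsum2 := (hinj.hasSum_iff hzero).mpr havg
  have hFeq : (F ∘ fun p : ℕ ↦ 2 * p) = fun p : ℕ ↦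
      ((ascPochhammer ℝ p).eval a * (ascPochhammer ℝ p).eval (a + 1/2)
        / ((ascPochhammer ℝ p).eval (1/2) * (p.factorial : ℝ))) * x ^ p := by
    funext p
    rw [Function.comp_apply, hF]
    simp only []
    rw [term_eq a p, (even_two_mul p).neg_pow]
    have hxp : s ^ (2 * p) = x ^ p := by rw [pow_mul, hsx]
    rw [hxp]
    ring
  rw [hFeq] at hsum2
  unfold hyp2F1
  exact hsum2.tsum_eq
end

section
/- Let m be a positive integer and define θ₃(x) = ₂F₁(-m/2, -(m+1)/2; -1/2; x/m²) (terminating) and θ₄(x) = ((m²-1)/(3m²)) ₂F₁(-(m-2)/2, -(m-3)/2; 5/2; x/m²), interpreted as the polynomials determined by (1+t)(1 - t/m)^m = θ₃(t²) + t³·θ₄(t²). Then θ₃(x)² - x³·θ₄(x)² = (1-x)(1 - x/m²)^m as polynomials in x. -/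
theorem stmt17 (m : ℕ) (hm : 0 < m) (p q : Polynomial ℚ)
    (hpq : ∀ t : ℚ, (1 + t) * (1 - t / m) ^ m
      = p.eval (t ^ 2) + t ^ 3 * q.eval (t ^ 2)) :
    ∀ x : ℚ, p.eval x ^ 2 - x ^ 3 * q.eval x ^ 2
      = (1 - x) * (1 - x / m ^ 2) ^ m := by
  have hm' : (m : ℚ) ≠ 0 := Nat.cast_ne_zero.mpr hm.ne'
  set R : Polynomial ℚ :=
    p ^ 2 - Polynomial.X ^ 3 * q ^ 2 -
      (1 - Polynomial.X) * (1 - Polynomial.C (((m : ℚ) ^ 2)⁻¹) * Polynomial.X) ^ m with hR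
  have key : ∀ t : ℚ, R.eval (t ^ 2) = 0 := by
    intro t
    have h1 := hpq t
    have h2 := hpq (-t)
    have hmul : (p.eval (t ^ 2)) ^ 2 - (t ^ 2) ^ 3 * (q.eval (t ^ 2)) ^ 2
        = (1 - t ^ 2) * (1 - t ^ 2 / (m : ℚ) ^ 2) ^ m := by
      calc (p.eval (t ^ 2)) ^ 2 - (t ^ 2) ^ 3 * (q.eval (t ^ 2)) ^ 2
          = (p.eval (t ^ 2) + t ^ 3 * q.eval (t ^ 2)) *
              (p.eval ((-t) ^ 2) + (-t) ^ 3 * q.eval ((-t) ^ 2)) := by ring_nf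
        _ = ((1 + t) * (1 - t / m) ^ m) * ((1 + (-t)) * (1 - (-t) / m) ^ m) := by
              rw [← h1, ← h2]
        _ = (1 - t ^ 2) * ((1 - t / m) * (1 + t / m)) ^ m := by rw [mul_pow]; ring
        _ = (1 - t ^ 2) * (1 - t ^ 2 / (m : ℚ) ^ 2) ^ m := by
              congr 2; field_simp; ring
    simp only [hR, Polynomial.eval_sub, Polynomial.eval_mul, Polynomial.eval_pow,
      Polynomial.eval_one, Polynomial.eval_X, Polynomial.eval_C]
    have hd : ((m : ℚ) ^ 2)⁻¹ * t ^ 2 = t ^ 2 / (m : ℚ) ^ 2 := by ring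
    rw [hd]
    linarith [hmul]
  have hRzero : R = 0 := by
    apply Polynomial.eq_zero_of_infinite_isRoot
    apply Set.infinite_of_injective_forall_mem (f := fun n : ℕ => ((n : ℚ)) ^ 2)
    case hi =>
      intro a b hab
      simp only at hab
      have : (a : ℚ) = b := by
        have ha : (0:ℚ) ≤ a := Nat.cast_nonneg a
        have hb : (0:ℚ) ≤ b := Nat.cast_nonneg b
        nlinarith
      exact_mod_cast this
    case hf =>
      intro n
      exact key (n : ℚ)
  intro x
  have hx := congrArg (Polynomial.eval x) hRzero
  simp only [hR, Polynomial.eval_sub, Polynomial.eval_mul, Polynomial.eval_pow,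
    Polynomial.eval_one, Polynomial.eval_X, Polynomial.eval_C, Polynomial.eval_zero] at hx
  have hd : ((m : ℚ) ^ 2)⁻¹ * x = x / (m : ℚ) ^ 2 := by ring
  rw [hd] at hx
  linarith [hx]
end
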